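/- Let N ≥ 1 and let θ : {1,…,N} → ℝ be any angles. For every x in the convex hull of V̄, the vector Λ R_θ x belongs to P̄° ∩ H̄; that is, (i) ⟨Λ R_θ x, y⟩ ≤ 1 for every y with ∑_{i,j}|y(i,j)| ≤ 1, and (ii) ∑_{i=1}^N (Λ R_θ x)(i,j) = 0 for j = 1, 2. -/

import Mathlib

open Finset

/-- The vertex set `V̄` of vectors `v_{p,q,j}` with `p ≠ q`, `j ∈ {1,2}`. -/
def vertexSetVbar (N : ℕ) : Set (Fin N × Fin 2 → ℝ) :=
  {v | ∃ p q : Fin N, ∃ j : Fin 2, p ≠ q ∧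
    v = fun il => if il = (p, j) then (1 / 2 : ℝ) else if il = (q, j) then -(1 / 2 : ℝ) else 0}

/-- The block-diagonal rotation `R_θ` acting on `ℝ^{2N}`. -/
noncomputable def rotMap {N : ℕ} (θ : Fin N → ℝ) (x : Fin N × Fin 2 → ℝ) :
    Fin N × Fin 2 → ℝ :=
  fun il =>
    if il.2 = 0 then Real.cos (θ il.1) * x (il.1, 0) - Real.sin (θ il.1) * x (il.1, 1)
    else Real.sin (θ il.1) * x (il.1, 0) + Real.cos (θ il.1) * x (il.1, 1)

/-- The orthogonal projection `Λ`: `(Λx)(i,j) = x(i,j) − (1/N) ∑_k x(k,j)`. -/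
noncomputable def lamMap {N : ℕ} (x : Fin N × Fin 2 → ℝ) : Fin N × Fin 2 → ℝ :=
  fun il => x il - (1 / (N : ℝ)) * ∑ k, x (k, il.2)

/-! The map `x ↦ Λ R_θ x` is linear, so the image of `conv V̄` lies in the convex hull of the images
of the vertices, and it suffices to bound these in the sup norm. Each row of a vertex has `ℓ¹`-mass
at most `1/2`, a planar rotation does not increase the `ℓ¹`-mass of a row, and `Λ` at most doubles
the sup norm (an average is bounded by the maximum). Hence `‖Λ R_θ x‖_∞ ≤ 1` on `conv V̄`, which is
`Λ R_θ x ∈ P̄°` by the `ℓ^∞`–`ℓ¹` duality. -/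

lemma sum_mul_le_norm_mul_sum_abs {ι : Type*} [Fintype ι] (z y : ι → ℝ) :
    ∑ i, z i * y i ≤ ‖z‖ * ∑ i, |y i| := by
  rw [Finset.mul_sum]
  refine Finset.sum_le_sum fun i _ => ?_
  calc z i * y i ≤ |z i| * |y i| := by rw [← abs_mul]; exact le_abs_self _
    _ ≤ ‖z‖ * |y i| := by
      gcongr
      exact norm_le_pi_norm z i

variable {N : ℕ}

lemma abs_rotMap_apply_le (θ : Fin N → ℝ) (x : Fin N × Fin 2 → ℝ) (i : Fin N) (l : Fin 2) :
    |rotMap θ x (i, l)| ≤ |x (i, 0)| + |x (i, 1)| := by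
  have hc := Real.abs_cos_le_one (θ i)
  have hs := Real.abs_sin_le_one (θ i)
  unfold rotMap
  split
  · calc _ ≤ |Real.cos (θ i)| * |x (i, 0)| + |Real.sin (θ i)| * |x (i, 1)| := by
          rw [← abs_mul, ← abs_mul]; exact abs_sub _ _
      _ ≤ 1 * |x (i, 0)| + 1 * |x (i, 1)| := by gcongr
      _ = _ := by ring
  · calc _ ≤ |Real.sin (θ i)| * |x (i, 0)| + |Real.cos (θ i)| * |x (i, 1)| := by
          rw [← abs_mul, ← abs_mul]; exact abs_add_le _ _
      _ ≤ 1 * |x (i, 0)| + 1 * |x (i, 1)| := by gcongr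
      _ = _ := by ring

lemma abs_add_abs_le_of_mem_vertexSetVbar {v : Fin N × Fin 2 → ℝ} (hv : v ∈ vertexSetVbar N)
    (i : Fin N) : |v (i, 0)| + |v (i, 1)| ≤ 1 / 2 := by
  obtain ⟨p, q, j, -, rfl⟩ := hv
  fin_cases j <;> simp only [Prod.mk.injEq, Fin.isValue, Fin.zero_eta, Fin.mk_one, and_true,
    and_false, if_false, abs_zero, add_zero, zero_add, one_ne_zero, zero_ne_one] <;>
    split_ifs <;> norm_num

lemma norm_rotMap_le_of_mem_vertexSetVbar (θ : Fin N → ℝ) {v : Fin N × Fin 2 → ℝ}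
    (hv : v ∈ vertexSetVbar N) : ‖rotMap θ v‖ ≤ 1 / 2 :=
  (pi_norm_le_iff_of_nonneg (by norm_num)).2 fun ⟨i, l⟩ => by
    rw [Real.norm_eq_abs]
    exact (abs_rotMap_apply_le θ v i l).trans (abs_add_abs_le_of_mem_vertexSetVbar hv i)

lemma norm_lamMap_le (x : Fin N × Fin 2 → ℝ) : ‖lamMap x‖ ≤ 2 * ‖x‖ := by
  refine (pi_norm_le_iff_of_nonneg (by positivity)).2 fun ⟨i, l⟩ => ?_
  have hN : (0 : ℝ) < N := by exact_mod_cast i.pos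
  have hmean : |1 / (N : ℝ) * ∑ k, x (k, l)| ≤ ‖x‖ := by
    rw [abs_mul, abs_of_pos (one_div_pos.2 hN), one_div_mul_eq_div, div_le_iff₀' hN]
    calc |∑ k, x (k, l)| ≤ ∑ k, |x (k, l)| := Finset.abs_sum_le_sum_abs _ _
      _ ≤ ∑ _k : Fin N, ‖x‖ := Finset.sum_le_sum fun k _ => norm_le_pi_norm x (k, l)
      _ = N * ‖x‖ := by simp
  rw [Real.norm_eq_abs, two_mul]
  exact (abs_sub _ _).trans (add_le_add (norm_le_pi_norm x (i, l)) hmean)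

lemma sum_lamMap_apply_eq_zero (x : Fin N × Fin 2 → ℝ) (j : Fin 2) :
    ∑ i, lamMap x (i, j) = 0 := by
  rcases Nat.eq_zero_or_pos N with rfl | hN
  · simp
  have hN' : (N : ℝ) ≠ 0 := by positivity
  simp only [lamMap, Finset.sum_sub_distrib, Finset.sum_const, Finset.card_univ,
    Fintype.card_fin, nsmul_eq_mul]
  field_simp
  ring

noncomputable def rotLinearMap (θ : Fin N → ℝ) :
    (Fin N × Fin 2 → ℝ) →ₗ[ℝ] Fin N × Fin 2 → ℝ where
  toFun := rotMap θ
  map_add' x y := by funext il; simp only [rotMap, Pi.add_apply]; split <;> ring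
  map_smul' c x := by
    funext il; simp only [rotMap, Pi.smul_apply, smul_eq_mul, RingHom.id_apply]; split <;> ring

noncomputable def lamLinearMap : (Fin N × Fin 2 → ℝ) →ₗ[ℝ] Fin N × Fin 2 → ℝ where
  toFun := lamMap
  map_add' x y := by
    funext il; simp only [lamMap, Pi.add_apply, Finset.sum_add_distrib]; ring
  map_smul' c x := by
    funext il; simp only [lamMap, Pi.smul_apply, smul_eq_mul, RingHom.id_apply, ← Finset.mul_sum]
    ring

lemma norm_lamMap_rotMap_le_one_of_mem_convexHull (θ : Fin N → ℝ) {x : Fin N × Fin 2 → ℝ}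
    (hx : x ∈ convexHull ℝ (vertexSetVbar N)) : ‖lamMap (rotMap θ x)‖ ≤ 1 := by
  let f := lamLinearMap.comp (rotLinearMap θ)
  have hvertex : f '' vertexSetVbar N ⊆ Metric.closedBall 0 1 := by
    rintro _ ⟨v, hv, rfl⟩
    rw [mem_closedBall_zero_iff]
    calc ‖lamMap (rotMap θ v)‖ ≤ 2 * ‖rotMap θ v‖ := norm_lamMap_le _
      _ ≤ 2 * (1 / 2) := by gcongr; exact norm_rotMap_le_of_mem_vertexSetVbar θ hv
      _ = 1 := by norm_num
  have hfx : f x ∈ convexHull ℝ (f '' vertexSetVbar N) :=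
    f.image_convexHull (vertexSetVbar N) ▸ Set.mem_image_of_mem f hx
  exact mem_closedBall_zero_iff.1 (convexHull_min hvertex (convex_closedBall 0 1) hfx)

theorem lam_rot_convexHull_Vbar_subset_polar_inter_Hbar_general {N : ℕ}
    (θ : Fin N → ℝ) (x : Fin N × Fin 2 → ℝ)
    (hx : x ∈ convexHull ℝ (vertexSetVbar N)) :
    (∀ y : Fin N × Fin 2 → ℝ, (∑ il, |y il| ≤ 1) →
        ∑ il, lamMap (rotMap θ x) il * y il ≤ 1) ∧
      ∀ j : Fin 2, ∑ i, lamMap (rotMap θ x) (i, j) = 0 := by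
  refine ⟨fun y hy => ?_, sum_lamMap_apply_eq_zero _⟩
  calc ∑ il, lamMap (rotMap θ x) il * y il ≤ ‖lamMap (rotMap θ x)‖ * ∑ il, |y il| :=
        sum_mul_le_norm_mul_sum_abs _ _
    _ ≤ 1 * 1 := by
        gcongr
        exact norm_lamMap_rotMap_le_one_of_mem_convexHull θ hx
    _ = 1 := one_mul 1

theorem lam_rot_convexHull_Vbar_subset_polar_inter_Hbar {N : ℕ} (hN : 1 ≤ N)
    (θ : Fin N → ℝ) (x : Fin N × Fin 2 → ℝ)
    (hx : x ∈ convexHull ℝ (vertexSetVbar N)) :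
    (∀ y : Fin N × Fin 2 → ℝ, (∑ il, |y il| ≤ 1) →
        ∑ il, lamMap (rotMap θ x) il * y il ≤ 1) ∧
      ∀ j : Fin 2, ∑ i, lamMap (rotMap θ x) (i, j) = 0 :=
  lam_rot_convexHull_Vbar_subset_polar_inter_Hbar_general θ x hx
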